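/- arXiv:2303.12222 — 9 statements merged into one kernel-verified Lean document; each statement's English description precedes it below -/
import Mathlib

section
/- For all integers m ≥ 2 and n ≥ 3, the cylindrical grid graph P_m □ C_n (the Cartesian product of the path on m vertices with the cycle on n vertices) is non-distance magic, i.e., it admits no distance magic labeling. (This settles Vilfred's 1996 conjecture.) -/
open Finset SimpleGraph
open scoped Classical

noncomputable section

variable {V : Type*}

/-- The open neighbourhood of `u` in `G`, as a `Finset`. -/
def nbr [Fintype V] (G : SimpleGraph V) (u : V) : Finset V :=
  G.neighborFinset u

/-- `G` is distance magic if there is a bijective labeling of its vertices by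
`{1, …, |V|}` such that the sum of the labels over every open neighbourhood is
the same constant `S`. -/
def IsDistanceMagic [Fintype V] (G : SimpleGraph V) : Prop :=
  ∃ f : V ≃ Fin (Fintype.card V), ∃ S : ℕ,
    ∀ u : V, ∑ v ∈ nbr G u, ((f v : ℕ) + 1) = S

/-- A neighbourhood chain `N₁ N₂ ⋯ N_k` in `G` (0-indexed: `N_i = nbr G (u i)` for
`i < k`): the `uᵢ` are distinct, consecutive neighbourhoods intersect, and
non-consecutive neighbourhoods are disjoint except possibly the first and last. -/
structure NbhChain [Fintype V] (G : SimpleGraph V) (k : ℕ) where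
  hk : 2 ≤ k
  u : ℕ → V
  inj : ∀ i j, i < k → j < k → u i = u j → i = j
  consec : ∀ i, i + 1 < k → (nbr G (u i) ∩ nbr G (u (i + 1))).Nonempty
  nonconsec : ∀ i j, j < k → i + 1 < j → j - i < k - 1 →
    nbr G (u i) ∩ nbr G (u j) = ∅

/-- A Type-1 neighbourhood chain (NC-T1) of length `n` in `G`. -/
structure NCT1 [Fintype V] (G : SimpleGraph V) (n : ℕ) extends NbhChain G n where
  m : ℕ
  hm : n + 1 ≤ m
  v : ℕ → V
  vinj : ∀ i j, i < m → j < m → v i = v j → i = j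
  disj_uv : ∀ i j, i < n → j < m → u i ≠ v j
  nonadj : ∀ i j, i < n → j < n → ¬ G.Adj (u i) (u j)
  nbh_sub : ∀ i, i < n → ∀ x ∈ nbr G (u i), ∃ j, j < m ∧ x = v j
  nbh_nonempty : ∀ i, i < n → (nbr G (u i)).Nonempty
  first : nbr G (u 0) \ nbr G (u 1) = {v 0}
  last : nbr G (u (n - 1)) \ nbr G (u (n - 2)) = {v (n - 1)}
  succ_sdiff_sub : ∀ i, i + 2 < n →
    nbr G (u (i + 1)) \ nbr G (u i) ⊆ nbr G (u (i + 2))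
  sdiff_nonempty : ∀ i, i + 1 < n →
    (nbr G (u i) \ nbr G (u (i + 1))).Nonempty ∧
      (nbr G (u (i + 1)) \ nbr G (u i)).Nonempty

/-- A Type-2 pair of neighbourhood chains (NC-T2): two NC-T1 chains of the same
length `n` satisfying the linking conditions (i) and (ii). -/
structure NCT2 [Fintype V] (G : SimpleGraph V) (n : ℕ) where
  A : NCT1 G n
  B : NCT1 G n
  cond1_left : nbr G (A.u 0) ∩ nbr G (A.u 1) ∩ nbr G (B.u 0)
      = nbr G (B.u 0) \ nbr G (B.u 1)
  cond1_left_ne : (nbr G (B.u 0) \ nbr G (B.u 1)).Nonempty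
  cond1_right : nbr G (A.u (n - 1)) ∩ nbr G (B.u (n - 1)) ∩ nbr G (B.u (n - 2))
      = nbr G (A.u (n - 1)) \ nbr G (A.u (n - 2))
  cond1_right_ne : (nbr G (A.u (n - 1)) \ nbr G (A.u (n - 2))).Nonempty
  cond2 : ∀ i, 1 ≤ i → i + 1 < n →
    (nbr G (A.u i) ∩ nbr G (A.u (i + 1)) ∩ nbr G (B.u i) ∩ nbr G (B.u (i - 1))).Nonempty

/-- A Type-3 pair of neighbourhood chains (NC-T3) in `G`: two neighbourhood chains
`c1`, `c2` of lengths `n1, n2 ≥ 2`, whose vertex sets `V₁, V₂` together with a set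
`V₃` (of size `n3 ≥ max n1 n2 + 3`) containing all their neighbourhoods are pairwise
disjoint, `V₁` and `V₂` are stable, and conditions (i), (ii) hold. -/
structure NCT3 [Fintype V] (G : SimpleGraph V) (n1 n2 : ℕ) where
  hn1 : 2 ≤ n1
  hn2 : 2 ≤ n2
  n3 : ℕ
  hn3 : max n1 n2 + 3 ≤ n3
  c1 : NbhChain G n1
  c2 : NbhChain G n2
  w : ℕ → V
  winj : ∀ i j, i < n3 → j < n3 → w i = w j → i = j
  disj12 : ∀ i j, i < n1 → j < n2 → c1.u i ≠ c2.u j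
  disj13 : ∀ i j, i < n1 → j < n3 → c1.u i ≠ w j
  disj23 : ∀ i j, i < n2 → j < n3 → c2.u i ≠ w j
  stable1 : ∀ i j, i < n1 → j < n1 → ¬ G.Adj (c1.u i) (c1.u j)
  stable2 : ∀ i j, i < n2 → j < n2 → ¬ G.Adj (c2.u i) (c2.u j)
  nbh_sub1 : ∀ i, i < n1 → ∀ x ∈ nbr G (c1.u i), ∃ k, k < n3 ∧ x = w k
  nbh_sub2 : ∀ i, i < n2 → ∀ x ∈ nbr G (c2.u i), ∃ k, k < n3 ∧ x = w k
  nbh_nonempty1 : ∀ i, i < n1 → (nbr G (c1.u i)).Nonempty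
  nbh_nonempty2 : ∀ i, i < n2 → (nbr G (c2.u i)).Nonempty
  propI1 : ∀ i, i + 2 < n1 →
    nbr G (c1.u (i + 1)) \ nbr G (c1.u i) ⊆ nbr G (c1.u (i + 2))
  propI1' : ∀ i, i + 1 < n1 →
    (nbr G (c1.u i) \ nbr G (c1.u (i + 1))).Nonempty ∧
      (nbr G (c1.u (i + 1)) \ nbr G (c1.u i)).Nonempty
  propI2 : ∀ i, i + 2 < n2 →
    nbr G (c2.u (i + 1)) \ nbr G (c2.u i) ⊆ nbr G (c2.u (i + 2))
  propI2' : ∀ i, i + 1 < n2 →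
    (nbr G (c2.u i) \ nbr G (c2.u (i + 1))).Nonempty ∧
      (nbr G (c2.u (i + 1)) \ nbr G (c2.u i)).Nonempty
  propII : ∃ i j r : ℕ, i + 1 < n1 ∧ j + 1 < n2 ∧ r + 1 ≤ min n1 n2 / 2 ∧
    i + 1 + 2 * r < n1 ∧ j + 1 + 2 * r < n2 ∧
    nbr G (c2.u j) \ nbr G (c2.u (j + 1)) ⊆ nbr G (c1.u i) \ nbr G (c1.u (i + 1)) ∧
    nbr G (c1.u (i + 1 + 2 * r)) \ nbr G (c1.u (i + 2 * r)) ⊆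
      nbr G (c2.u (j + 1 + 2 * r)) \ nbr G (c2.u (j + 2 * r)) ∧
    1 ≤ ((nbr G (c1.u i) \ nbr G (c1.u (i + 1))) \
          (nbr G (c2.u j) \ nbr G (c2.u (j + 1)))).card +
        ((nbr G (c2.u (j + 1 + 2 * r)) \ nbr G (c2.u (j + 2 * r))) \
          (nbr G (c1.u (i + 1 + 2 * r)) \ nbr G (c1.u (i + 2 * r)))).card

/-! Pad a distance magic labelling of `P_m □ C_n` with zero rows `0` and `m + 1` and write `L k j`
for the label in row `k` and column `j ∈ ℤ/n`. The magic equations determine every row from row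
`1`: by induction, `(-1)^k L k j + ∑_{t<k} L 1 (j - k + 1 + 2t) = ⌊k/2⌋ S`. Since row `m + 1`
vanishes, every sum of `m + 1` labels of row `1` along a progression of step `2` equals
`⌊(m+1)/2⌋ S`, which turns the closed form into a glide-reflection identity between rows `k` and
`m + 1 - k`. For even `m` it gives equal labels in rows `1` and `m`; for odd `m` it gives two labels
in rows `2` and `m - 1` summing to `0`. -/

section MagicStrip

variable {R : Type*} [CommRing R]

/-- Rows `1, …, m` of `L` carry a labelling of `P_m □ C` (columns `j` and `j ± 1` adjacent) whose
neighbourhood sums all equal `S`; rows `0` and `m + 1` are zero padding, so that the two boundary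
rows satisfy the same equation as the inner ones. -/
structure IsMagicStrip (m : ℕ) (L : ℕ → R → ℤ) (S : ℤ) : Prop where
  row_zero : ∀ j, L 0 j = 0
  row_add_one_self : ∀ j, L (m + 1) j = 0
  nbr_sum : ∀ i < m, ∀ j, L i j + L (i + 2) j + L (i + 1) (j - 1) + L (i + 1) (j + 1) = S

def diagSum (a : R → ℤ) (k : ℕ) (x : R) : ℤ :=
  ∑ t ∈ range k, a (x + 2 * t)

theorem diagSum_add (a : R → ℤ) (k l : ℕ) (x : R) :
    diagSum a (k + l) x = diagSum a k x + diagSum a l (x + 2 * k) := by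
  simp only [diagSum, sum_range_add, Nat.cast_add, mul_add, add_assoc]

theorem diagSum_add_two (a : R → ℤ) (k : ℕ) (x : R) :
    diagSum a (k + 2) x + diagSum a k (x + 2) =
      diagSum a (k + 1) x + diagSum a (k + 1) (x + 2) := by
  simp only [diagSum, sum_range_succ]
  push_cast
  ring_nf

namespace IsMagicStrip

variable {m : ℕ} {L : ℕ → R → ℤ} {S : ℤ}

theorem neg_one_pow_mul_add_diagSum (hL : IsMagicStrip m L S) :
    ∀ k ≤ m + 1, ∀ j, (-1) ^ k * L k j + diagSum (L 1) k (j - k + 1) = (k / 2 : ℕ) * S := by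
  intro k
  induction k using Nat.twoStepInduction with
  | zero => simp [hL.row_zero, diagSum]
  | one => simp [diagSum]
  | more k ih₀ ih₁ =>
    intro hk j
    have e₀ := ih₀ (by omega) j
    have e₁ := ih₁ (by omega) (j - 1)
    have e₂ := ih₁ (by omega) (j + 1)
    have hsum := hL.nbr_sum k (by omega) j
    have hdiag := diagSum_add_two (L 1) k (j - k - 1)
    have hhalf : (((k + 2) / 2 : ℕ) : ℤ) = (-1) ^ k + 2 * ((k + 1) / 2 : ℕ) - (k / 2 : ℕ) := by
      rcases Nat.even_or_odd k with ⟨r, rfl⟩ | ⟨r, rfl⟩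
      · rw [Even.neg_one_pow ⟨r, rfl⟩]; omega
      · rw [Odd.neg_one_pow ⟨r, rfl⟩]; omega
    rw [hhalf]
    simp only [Nat.cast_add, Nat.cast_one, Nat.cast_ofNat] at e₁ e₂ ⊢
    ring_nf at e₀ e₁ e₂ hdiag hsum ⊢
    linear_combination (-1) ^ k * hsum - e₀ + e₁ + e₂ + hdiag

theorem diagSum_eq (hL : IsMagicStrip m L S) (x : R) :
    diagSum (L 1) (m + 1) x = ((m + 1) / 2 : ℕ) * S := by
  have h := hL.neg_one_pow_mul_add_diagSum (m + 1) le_rfl (x + m)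
  rwa [hL.row_add_one_self, mul_zero, zero_add,
    show x + m - ((m + 1 : ℕ) : R) + 1 = x by push_cast; ring] at h

theorem reflect (hL : IsMagicStrip m L S) {k k' : ℕ} (hk : k + k' = m + 1) (j : R) :
    (-1) ^ k * L k j + (-1) ^ k' * L k' (j + m + 1) =
      ((k / 2 + k' / 2 : ℕ) - ((m + 1) / 2 : ℕ) : ℤ) * S := by
  have e := hL.neg_one_pow_mul_add_diagSum k (by omega) j
  have e' := hL.neg_one_pow_mul_add_diagSum k' (by omega) (j + m + 1)
  have hadd := diagSum_add (L 1) k k' (j - k + 1)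
  rw [hk, hL.diagSum_eq] at hadd
  have hcast : (m : R) + 1 = k + k' := by rw [← Nat.cast_add_one, ← hk, Nat.cast_add]
  rw [show j + m + 1 - k' + 1 = j - k + 1 + 2 * k by linear_combination hcast] at e'
  simp only [Nat.cast_add]
  linear_combination e + e' + hadd

theorem glide_of_even (hL : IsMagicStrip m L S) (hm : Even m) (j : R) :
    L m (j + m + 1) = L 1 j := by
  have h := hL.reflect (k := 1) (k' := m) (add_comm _ _) j
  rw [hm.neg_one_pow, show 1 / 2 + m / 2 = (m + 1) / 2 by rcases hm with ⟨r, rfl⟩; omega] at h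
  linear_combination h

theorem antiglide_of_odd (hL : IsMagicStrip m L S) (hm : Odd m) (j : R) :
    L 2 j + L (m - 1) (j + m + 1) = 0 := by
  obtain ⟨r, rfl⟩ := hm
  have h := hL.reflect (k := 2) (k' := 2 * r) (by omega) j
  rw [(even_two_mul r).neg_one_pow, show 2 / 2 + 2 * r / 2 = (2 * r + 1 + 1) / 2 by omega] at h
  simpa using h

end IsMagicStrip

end MagicStrip

section GridNeighbourhoods

variable {M : Type*} [AddCommMonoid M]

theorem sum_neighborFinset_boxProd {α β : Type*} (G : SimpleGraph α) (H : SimpleGraph β)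
    (x : α × β) [Fintype (G.neighborSet x.1)] [Fintype (H.neighborSet x.2)]
    [Fintype ((G □ H).neighborSet x)] (u : α × β → M) :
    ∑ y ∈ (G □ H).neighborFinset x, u y =
      ∑ a ∈ G.neighborFinset x.1, u (a, x.2) + ∑ b ∈ H.neighborFinset x.2, u (x.1, b) := by
  rw [neighborFinset_boxProd, sum_disjUnion, sum_product, sum_product]
  simp only [sum_singleton]

theorem sum_neighborFinset_pathGraph {m : ℕ} (a : Fin m) [Fintype ((pathGraph m).neighborSet a)]
    (u : ℕ → M) (h₀ : u 0 = 0) (hm : u (m + 1) = 0) :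
    ∑ b ∈ (pathGraph m).neighborFinset a, u (b + 1) = u a + u (a + 2) := by
  calc ∑ b ∈ (pathGraph m).neighborFinset a, u (b + 1)
      = ∑ i ∈ ({(a : ℕ), (a : ℕ) + 2} : Finset ℕ) with i ≠ 0 ∧ i ≠ m + 1, u i := by
        refine sum_nbij (fun b => b + 1) ?_ ?_ ?_ (fun _ _ => rfl)
        · intro b hb
          simp only [mem_neighborFinset, pathGraph_adj] at hb
          simp only [mem_filter, mem_insert, mem_singleton]
          omega
        · intro b _ c _ h
          exact Fin.ext (by simpa using h)
        · intro i hi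
          simp only [coe_filter, mem_insert, mem_singleton, Set.mem_ofPred_eq] at hi
          refine ⟨⟨i - 1, by omega⟩, ?_, by simp; omega⟩
          simp only [coe_neighborFinset, mem_neighborSet, pathGraph_adj]
          omega
    _ = ∑ i ∈ ({(a : ℕ), (a : ℕ) + 2} : Finset ℕ), u i := by
        refine sum_filter_of_ne fun i _ hi => ⟨?_, ?_⟩ <;> rintro rfl
        exacts [hi h₀, hi hm]
    _ = u a + u (a + 2) := sum_pair (by omega)

theorem sum_neighborFinset_cycleGraph {n : ℕ} (b : Fin (n + 3))
    [Fintype ((cycleGraph (n + 3)).neighborSet b)] (u : Fin (n + 3) → M) :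
    ∑ c ∈ (cycleGraph (n + 3)).neighborFinset b, u c = u (b - 1) + u (b + 1) := by
  have hnbr : (cycleGraph (n + 3)).neighborFinset b = {b - 1, b + 1} := by
    ext c
    rw [mem_neighborFinset, ← mem_neighborSet, cycleGraph_neighborSet (n := n + 1)]
    simp
  have hne : b - 1 ≠ b + 1 := by
    rw [Ne, sub_eq_iff_eq_add, add_assoc, left_eq_add, Fin.ext_iff, Fin.val_add, Fin.val_one,
      Fin.val_zero, Nat.mod_eq_of_lt (by omega)]
    omega
  rw [hnbr, sum_pair hne]

end GridNeighbourhoods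

section PaddedGrid

variable {C : Type*} {m : ℕ}

def padRows (g : Fin m × C → ℤ) (i : ℕ) (j : C) : ℤ :=
  if h : i ≠ 0 ∧ i ≤ m then g (⟨i - 1, by omega⟩, j) else 0

theorem padRows_of_ne_zero_of_le (g : Fin m × C → ℤ) {i : ℕ} (hi : i ≠ 0) (him : i ≤ m) (j : C) :
    padRows g i j = g (⟨i - 1, by omega⟩, j) :=
  dif_pos ⟨hi, him⟩

theorem padRows_succ (g : Fin m × C → ℤ) (a : Fin m) (j : C) : padRows g (a + 1) j = g (a, j) :=
  padRows_of_ne_zero_of_le g (Nat.succ_ne_zero _) a.isLt j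

theorem padRows_zero (g : Fin m × C → ℤ) (j : C) : padRows g 0 j = 0 :=
  dif_neg (by simp)

theorem padRows_add_one_self (g : Fin m × C → ℤ) (j : C) : padRows g (m + 1) j = 0 :=
  dif_neg (by omega)

open scoped Fin.CommRing in
theorem isMagicStrip_padRows {n : ℕ} (g : Fin m × Fin (n + 3) → ℤ) (S : ℤ)
    (hg : ∀ x, ∑ y ∈ nbr (pathGraph m □ cycleGraph (n + 3)) x, g y = S) :
    IsMagicStrip m (padRows g) S where
  row_zero := padRows_zero g
  row_add_one_self := padRows_add_one_self g
  nbr_sum i hi j := by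
    have h := hg (⟨i, hi⟩, j)
    rw [nbr, sum_neighborFinset_boxProd, sum_neighborFinset_cycleGraph] at h
    simp_rw [← padRows_succ g] at h
    rwa [sum_neighborFinset_pathGraph _ (fun r => padRows g r j) (padRows_zero g j)
      (padRows_add_one_self g j), ← add_assoc] at h

end PaddedGrid

open scoped Fin.CommRing in
/-- For all integers `m ≥ 2` and `n ≥ 3`, the cylindrical grid graph
`P_m □ C_n` is non-distance magic (Vilfred's conjecture). -/
theorem cylindrical_grid_non_distance_magic (m n : ℕ) (hm : 2 ≤ m) (hn : 3 ≤ n) :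
    ¬ IsDistanceMagic (SimpleGraph.pathGraph m □ SimpleGraph.cycleGraph n) := by
  obtain ⟨n, rfl⟩ : ∃ k, n = k + 3 := ⟨n - 3, by omega⟩
  rintro ⟨f, S, hf⟩
  have hL := isMagicStrip_padRows (fun v => ((f v : ℕ) : ℤ) + 1) S fun x => by exact_mod_cast hf x
  rcases Nat.even_or_odd m with hm' | hm'
  · have h := hL.glide_of_even hm' 0
    rw [padRows_of_ne_zero_of_le _ (by omega) le_rfl,
      padRows_of_ne_zero_of_le _ one_ne_zero (by omega), add_left_inj, Nat.cast_inj,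
      Fin.val_inj, f.apply_eq_iff_eq, Prod.mk.injEq, Fin.mk.injEq] at h
    omega
  · have h := hL.antiglide_of_odd hm' 0
    rw [padRows_of_ne_zero_of_le _ two_ne_zero (by omega),
      padRows_of_ne_zero_of_le _ (by omega) (by omega)] at h
    omega
end
end

section
/- Any finite simple graph G containing a Type-3 pair of neighbourhood chains (NC-T3) is non-distance magic, i.e., admits no distance magic labeling. -/
open Finset SimpleGraph
open scoped Classical

noncomputable section

variable {V : Type*}

/-
Under a labeling with constant neighbourhood sum `S`, write `σ(X)` for the label sum of
`X` and `dₜ = σ(Nₜ \ Nₜ₊₁)` along a chain. Comparing `σ(Nₐ) = σ(N_b)` gives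
`σ(Nₐ \ N_b) = σ(N_b \ Nₐ)`; along a chain with property (i), `Nₜ₊₁ ∩ Nₜ₊₂ = Nₜ₊₁ \ Nₜ`,
so `dₜ + dₜ₊₁ = S` and `d` is 2-periodic. Condition (ii) then yields sets
`D₂ ⊆ D₁` and `E₁ ⊆ E₂` with `σ(E₁) = σ(D₁)` and `σ(E₂) = σ(D₂)`, hence
`σ(D₁ \ D₂) + σ(E₂ \ E₁) = 0`, impossible for positive labels since one of the two
differences is nonempty.
-/

theorem Finset.inter_eq_sdiff_of_disjoint_of_sdiff_subset {α : Type*} [DecidableEq α]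
    {A B C : Finset α} (hAC : Disjoint A C) (hBA : B \ A ⊆ C) : B ∩ C = B \ A := by
  ext x
  have hx := @hBA x
  have hxA : x ∈ A → x ∉ C := fun h => Finset.disjoint_left.mp hAC h
  simp only [Finset.mem_inter, Finset.mem_sdiff] at hx ⊢
  tauto

section ConstantNeighbourhoodSum

variable {M : Type*} [AddCancelCommMonoid M] [Fintype V] {G : SimpleGraph V}
  {g : V → M} {S : M}

theorem sum_nbr_sdiff_comm (hS : ∀ u, ∑ v ∈ nbr G u, g v = S) (a b : V) :
    ∑ v ∈ nbr G a \ nbr G b, g v = ∑ v ∈ nbr G b \ nbr G a, g v := by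
  have ha := Finset.sum_inter_add_sum_sdiff (nbr G a) (nbr G b) g
  have hb := Finset.sum_inter_add_sum_sdiff (nbr G b) (nbr G a) g
  rw [Finset.inter_comm, hS, ← hS b, ← hb] at ha
  exact add_left_cancel ha

namespace NbhChain

variable {n : ℕ} (c : NbhChain G n)

theorem sum_sdiff_add_sum_sdiff_succ (hS : ∀ u, ∑ v ∈ nbr G u, g v = S)
    (hI : ∀ i, i + 2 < n → nbr G (c.u (i + 1)) \ nbr G (c.u i) ⊆ nbr G (c.u (i + 2)))
    {t : ℕ} (ht : t + 2 < n) (hn : 4 ≤ n) :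
    ∑ v ∈ nbr G (c.u t) \ nbr G (c.u (t + 1)), g v
      + ∑ v ∈ nbr G (c.u (t + 1)) \ nbr G (c.u (t + 2)), g v = S := by
  have hdisj : Disjoint (nbr G (c.u t)) (nbr G (c.u (t + 2))) :=
    Finset.disjoint_iff_inter_eq_empty.mpr (c.nonconsec t (t + 2) ht (by omega) (by omega))
  have hinter := Finset.inter_eq_sdiff_of_disjoint_of_sdiff_subset hdisj (hI t ht)
  have hsplit := Finset.sum_inter_add_sum_sdiff (nbr G (c.u (t + 1))) (nbr G (c.u (t + 2))) g
  rwa [hS, hinter, ← sum_nbr_sdiff_comm hS] at hsplit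

theorem sum_sdiff_add_two_mul (hS : ∀ u, ∑ v ∈ nbr G u, g v = S)
    (hI : ∀ i, i + 2 < n → nbr G (c.u (i + 1)) \ nbr G (c.u i) ⊆ nbr G (c.u (i + 2)))
    (i s : ℕ) (h : i + 2 * s + 1 < n) :
    ∑ v ∈ nbr G (c.u (i + 2 * s)) \ nbr G (c.u (i + 2 * s + 1)), g v
      = ∑ v ∈ nbr G (c.u i) \ nbr G (c.u (i + 1)), g v := by
  induction s with
  | zero => rfl
  | succ s ih =>
    have h₀ := c.sum_sdiff_add_sum_sdiff_succ hS hI (t := i + 2 * s) (by omega) (by omega)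
    have h₁ := c.sum_sdiff_add_sum_sdiff_succ hS hI (t := i + 2 * s + 1) (by omega) (by omega)
    rw [show i + 2 * s + 1 + 1 = i + 2 * s + 2 from rfl,
      show i + 2 * s + 1 + 2 = i + 2 * s + 2 + 1 from rfl, ← h₀, add_comm] at h₁
    rw [← ih (by omega), show i + 2 * (s + 1) = i + 2 * s + 2 by ring]
    exact add_right_cancel h₁

theorem sum_succ_sdiff_eq (hS : ∀ u, ∑ v ∈ nbr G u, g v = S)
    (hI : ∀ i, i + 2 < n → nbr G (c.u (i + 1)) \ nbr G (c.u i) ⊆ nbr G (c.u (i + 2)))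
    (i r : ℕ) (h : i + 1 + 2 * r < n) :
    ∑ v ∈ nbr G (c.u (i + 1 + 2 * r)) \ nbr G (c.u (i + 2 * r)), g v
      = ∑ v ∈ nbr G (c.u i) \ nbr G (c.u (i + 1)), g v := by
  rw [← c.sum_sdiff_add_two_mul hS hI i r (by omega), sum_nbr_sdiff_comm hS,
    show i + 1 + 2 * r = i + 2 * r + 1 by ring]

end NbhChain

end ConstantNeighbourhoodSum

theorem Finset.sum_sdiff_add_sum_sdiff_eq_zero {α M : Type*} [DecidableEq α]
    [AddCancelCommMonoid M] {g : α → M} {D₁ D₂ E₁ E₂ : Finset α} (hD : D₂ ⊆ D₁)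
    (hE : E₁ ⊆ E₂) (hE₁ : ∑ v ∈ E₁, g v = ∑ v ∈ D₁, g v)
    (hE₂ : ∑ v ∈ E₂, g v = ∑ v ∈ D₂, g v) :
    ∑ v ∈ D₁ \ D₂, g v + ∑ v ∈ E₂ \ E₁, g v = 0 := by
  have h := congrArg₂ (· + ·) (Finset.sum_sdiff hD (f := g)) (Finset.sum_sdiff hE (f := g))
  rw [hE₂, ← hE₁] at h
  refine add_right_cancel (b := ∑ v ∈ E₁, g v + ∑ v ∈ D₂, g v) ?_
  rw [zero_add]
  convert h using 1
  abel

/-- Any finite simple graph containing a Type-3 pair of neighbourhood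
chains (NC-T3) is non-distance magic. -/
theorem nct3_non_distance_magic [Fintype V] (G : SimpleGraph V) (n1 n2 : ℕ)
    (T : NCT3 G n1 n2) : ¬ IsDistanceMagic G := by
  rintro ⟨f, S, hS⟩
  obtain ⟨i, j, r, -, -, -, hi, hj, hD, hE, hcard⟩ := T.propII
  have hzero := Finset.sum_sdiff_add_sum_sdiff_eq_zero hD hE
    (T.c1.sum_succ_sdiff_eq hS T.propI1 i r hi) (T.c2.sum_succ_sdiff_eq hS T.propI2 j r hj)
  simp only [Nat.add_eq_zero_iff, Finset.sum_eq_zero_iff, Nat.add_one_ne_zero] at hzero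
  simp only [Finset.eq_empty_of_forall_notMem hzero.1, Finset.eq_empty_of_forall_notMem hzero.2,
    Finset.card_empty] at hcard
  omega
end
end

section
/- Let G be a finite simple graph with four distinct vertices u₁, u₂, w₁, w₂ such that N(u₁) ∩ N(u₂) ≠ ∅ and N(w₁) ∩ N(w₂) ≠ ∅, and suppose: (i) the set differences N(u₁)∖N(u₂), N(u₂)∖N(u₁), N(w₁)∖N(w₂), N(w₂)∖N(w₁) are all nonempty; (ii) N(w₁)∖N(w₂) ⊆ N(u₁)∖N(u₂) and N(u₂)∖N(u₁) ⊆ N(w₂)∖N(w₁); and (iii) |(N(u₁)∖N(u₂)) ∖ (N(w₁)∖N(w₂))| + |(N(w₂)∖N(w₁)) ∖ (N(u₂)∖N(u₁))| ≥ 1. Then G is non-distance magic, i.e., G admits no distance magic labeling. -/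
open Finset SimpleGraph
open scoped Classical

noncomputable section

variable {V : Type*}

/-!
Constant neighbourhood sums make the label sums over `N(a) ∖ N(b)` and `N(b) ∖ N(a)` agree
for any two vertices `a, b`. Along the inclusions (ii) this gives
`Σ N(u₁)∖N(u₂) = Σ N(u₂)∖N(u₁) ≤ Σ N(w₂)∖N(w₁) = Σ N(w₁)∖N(w₂) ≤ Σ N(u₁)∖N(u₂)`,
so all are equal; as labels are positive, both inclusions of (ii) are equalities, against (iii).
-/

theorem Finset.eq_of_subset_of_sum_le {ι M : Type*} [AddCommMonoid M] [PartialOrder M]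
    [IsOrderedCancelAddMonoid M] {s t : Finset ι} {f : ι → M} (hst : s ⊆ t)
    (hpos : ∀ i ∈ t, 0 < f i) (hle : ∑ i ∈ t, f i ≤ ∑ i ∈ s, f i) : s = t := by
  by_contra hne
  obtain ⟨i, hit, his⟩ := not_subset.mp fun hts => hne (hst.antisymm hts)
  exact (sum_lt_sum_of_subset hst hit his (hpos i hit)
    fun j hjt _ => (hpos j hjt).le).not_ge hle

theorem nbr_sdiff_eq_of_subset_of_nbr_sum_eq {M : Type*} [AddCancelCommMonoid M] [PartialOrder M]
    [IsOrderedCancelAddMonoid M] [Fintype V] (G : SimpleGraph V) {ℓ : V → M}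
    (hpos : ∀ v, 0 < ℓ v) {S : M} (hS : ∀ u, ∑ v ∈ nbr G u, ℓ v = S) {u1 u2 w1 w2 : V}
    (hw : nbr G w1 \ nbr G w2 ⊆ nbr G u1 \ nbr G u2)
    (hu : nbr G u2 \ nbr G u1 ⊆ nbr G w2 \ nbr G w1) :
    nbr G w1 \ nbr G w2 = nbr G u1 \ nbr G u2 ∧ nbr G u2 \ nbr G u1 = nbr G w2 \ nbr G w1 := by
  have hsdiff (a b : V) :
      ∑ v ∈ nbr G a \ nbr G b, ℓ v = ∑ v ∈ nbr G b \ nbr G a, ℓ v :=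
    sum_sdiff_eq_sum_sdiff_iff.mpr ((hS a).trans (hS b).symm)
  have hmono {s t : Finset V} (hst : s ⊆ t) : ∑ v ∈ s, ℓ v ≤ ∑ v ∈ t, ℓ v :=
    sum_le_sum_of_subset_of_nonneg hst fun v _ _ => (hpos v).le
  constructor
  · refine eq_of_subset_of_sum_le hw (fun v _ => hpos v) ?_
    calc ∑ v ∈ nbr G u1 \ nbr G u2, ℓ v = ∑ v ∈ nbr G u2 \ nbr G u1, ℓ v := hsdiff u1 u2
      _ ≤ ∑ v ∈ nbr G w2 \ nbr G w1, ℓ v := hmono hu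
      _ = ∑ v ∈ nbr G w1 \ nbr G w2, ℓ v := (hsdiff w1 w2).symm
  · refine eq_of_subset_of_sum_le hu (fun v _ => hpos v) ?_
    calc ∑ v ∈ nbr G w2 \ nbr G w1, ℓ v = ∑ v ∈ nbr G w1 \ nbr G w2, ℓ v := (hsdiff w1 w2).symm
      _ ≤ ∑ v ∈ nbr G u1 \ nbr G u2, ℓ v := hmono hw
      _ = ∑ v ∈ nbr G u2 \ nbr G u1, ℓ v := hsdiff u1 u2

theorem four_vertex_condition_non_distance_magic_general [Fintype V] (G : SimpleGraph V)
    (u1 u2 w1 w2 : V)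
    (hii1 : nbr G w1 \ nbr G w2 ⊆ nbr G u1 \ nbr G u2)
    (hii2 : nbr G u2 \ nbr G u1 ⊆ nbr G w2 \ nbr G w1)
    (hiii : 1 ≤ ((nbr G u1 \ nbr G u2) \ (nbr G w1 \ nbr G w2)).card +
        ((nbr G w2 \ nbr G w1) \ (nbr G u2 \ nbr G u1)).card) :
    ¬ IsDistanceMagic G := by
  rintro ⟨f, S, hS⟩
  obtain ⟨hw, hu⟩ :=
    nbr_sdiff_eq_of_subset_of_nbr_sum_eq G (fun v => Nat.succ_pos (f v)) hS hii1 hii2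
  rw [hw, hu, sdiff_self, sdiff_self] at hiii
  simp at hiii

/-- If a finite simple graph has four distinct vertices `u₁, u₂, w₁, w₂`
with intersecting neighbourhood pairs satisfying conditions (i), (ii), (iii),
then it is non-distance magic. -/
theorem four_vertex_condition_non_distance_magic [Fintype V] (G : SimpleGraph V)
    (u1 u2 w1 w2 : V)
    (hd12 : u1 ≠ u2) (hd13 : u1 ≠ w1) (hd14 : u1 ≠ w2)
    (hd23 : u2 ≠ w1) (hd24 : u2 ≠ w2) (hd34 : w1 ≠ w2)
    (hu : (nbr G u1 ∩ nbr G u2).Nonempty)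
    (hw : (nbr G w1 ∩ nbr G w2).Nonempty)
    (hi1 : (nbr G u1 \ nbr G u2).Nonempty)
    (hi2 : (nbr G u2 \ nbr G u1).Nonempty)
    (hi3 : (nbr G w1 \ nbr G w2).Nonempty)
    (hi4 : (nbr G w2 \ nbr G w1).Nonempty)
    (hii1 : nbr G w1 \ nbr G w2 ⊆ nbr G u1 \ nbr G u2)
    (hii2 : nbr G u2 \ nbr G u1 ⊆ nbr G w2 \ nbr G w1)
    (hiii : 1 ≤ ((nbr G u1 \ nbr G u2) \ (nbr G w1 \ nbr G w2)).card +
        ((nbr G w2 \ nbr G w1) \ (nbr G u2 \ nbr G u1)).card) :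
    ¬ IsDistanceMagic G :=
  four_vertex_condition_non_distance_magic_general G u1 u2 w1 w2 hii1 hii2 hiii
end
end

section
/- Let G be a finite simple graph, let f be a distance magic labeling of G, and let N_1 N_2 ⋯ N_n be a neighbourhood chain in G (with N_i the open neighbourhood of a vertex u_i) satisfying: N_{i+1} ∖ N_i ⊆ N_{i+2} for 1 ≤ i ≤ n−2, and N_i ∖ N_{i+1} and N_{i+1} ∖ N_i nonempty for 1 ≤ i ≤ n−1. Then for every 1 ≤ i ≤ n−1 and every integer r ≥ 0 with i+1+2r ≤ n, we have ∑_{v ∈ N_i ∖ N_{i+1}} f(v) = ∑_{v ∈ N_{i+1+2r} ∖ N_{i+2r}} f(v). -/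
open Finset SimpleGraph
open scoped Classical

noncomputable section

variable {V : Type*}

/-!
Write `s(X)` for the label sum over `X` and `Nᵢ` for the `i`-th neighbourhood of the chain. Since
`s(Nᵢ) = s(Nᵢ₊₁) = S`, the two differences `Nᵢ ∖ Nᵢ₊₁` and `Nᵢ₊₁ ∖ Nᵢ` have equal sums. Because
`Nᵢ₊₁ ∖ Nᵢ ⊆ Nᵢ₊₂` while `Nᵢ` and `Nᵢ₊₂` are disjoint, `Nᵢ₊₁ ∖ Nᵢ = Nᵢ₊₁ ∩ Nᵢ₊₂`, so splitting
`Nᵢ₊₂` along `Nᵢ₊₁` gives `s(Nᵢ₊₁ ∖ Nᵢ) + s(Nᵢ₊₂ ∖ Nᵢ₊₁) = S`. Two consecutive instances of this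
identity show that `s(Nᵢ₊₁ ∖ Nᵢ)` is unchanged when `i` advances by two.
-/

theorem Finset.sdiff_eq_inter_of_sdiff_subset {α : Type*} [DecidableEq α] {s t u : Finset α}
    (hsub : t \ s ⊆ u) (hdisj : Disjoint s u) : t \ s = t ∩ u := by
  ext x
  simp only [Finset.mem_sdiff, Finset.mem_inter]
  exact ⟨fun h => ⟨h.1, hsub (Finset.mem_sdiff.2 h)⟩,
    fun h => ⟨h.1, fun hs => Finset.disjoint_left.1 hdisj hs h.2⟩⟩

namespace NbhChain

variable [Fintype V] {G : SimpleGraph V} {n : ℕ} (C : NbhChain G n)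

theorem disjoint_nbr_add_two {a : ℕ} (ha : a + 2 < n) (hn : 4 ≤ n) :
    Disjoint (nbr G (C.u a)) (nbr G (C.u (a + 2))) :=
  Finset.disjoint_iff_inter_eq_empty.2 (C.nonconsec a (a + 2) ha (by omega) (by omega))

variable {M : Type*} [AddCancelCommMonoid M] {w : V → M} {S : M}
  (hsub : ∀ i, i + 2 < n → nbr G (C.u (i + 1)) \ nbr G (C.u i) ⊆ nbr G (C.u (i + 2)))
  (hw : ∀ u : V, ∑ v ∈ nbr G u, w v = S)
include hsub hw

theorem sum_sdiff_add_sum_sdiff_eq {a : ℕ} (ha : a + 2 < n) (hn : 4 ≤ n) :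
    ∑ v ∈ nbr G (C.u (a + 1)) \ nbr G (C.u a), w v +
      ∑ v ∈ nbr G (C.u (a + 2)) \ nbr G (C.u (a + 1)), w v = S := by
  rw [Finset.sdiff_eq_inter_of_sdiff_subset (hsub a ha) (C.disjoint_nbr_add_two ha hn),
    Finset.inter_comm, Finset.sum_inter_add_sum_sdiff, hw]

theorem sum_sdiff_add_two {a : ℕ} (ha : a + 3 < n) :
    ∑ v ∈ nbr G (C.u (a + 1)) \ nbr G (C.u a), w v =
      ∑ v ∈ nbr G (C.u (a + 3)) \ nbr G (C.u (a + 2)), w v := by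
  have h₁ := C.sum_sdiff_add_sum_sdiff_eq hsub hw (a := a) (by omega) (by omega)
  have h₂ := C.sum_sdiff_add_sum_sdiff_eq hsub hw (a := a + 1) (by omega) (by omega)
  exact add_right_cancel (h₁.trans h₂.symm |>.trans (add_comm _ _))

theorem sum_sdiff_add_two_mul_s6 {a : ℕ} (r : ℕ) (ha : a + 1 + 2 * r < n) :
    ∑ v ∈ nbr G (C.u (a + 1)) \ nbr G (C.u a), w v =
      ∑ v ∈ nbr G (C.u (a + 1 + 2 * r)) \ nbr G (C.u (a + 2 * r)), w v := by
  induction r with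
  | zero => rfl
  | succ r ih =>
    rw [ih (by omega), add_right_comm, C.sum_sdiff_add_two hsub hw (by omega),
      show a + 2 * r + 3 = a + 1 + 2 * (r + 1) by ring,
      show a + 2 * r + 2 = a + 2 * (r + 1) by ring]

end NbhChain

theorem chain_sdiff_sums_eq_general [Fintype V] (G : SimpleGraph V) (n : ℕ)
    (C : NbhChain G n)
    (hsub : ∀ i, i + 2 < n →
      nbr G (C.u (i + 1)) \ nbr G (C.u i) ⊆ nbr G (C.u (i + 2)))
    (f : V ≃ Fin (Fintype.card V)) (S : ℕ)
    (hf : ∀ u : V, ∑ v ∈ nbr G u, ((f v : ℕ) + 1) = S)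
    (i r : ℕ) (hir : i + 1 + 2 * r < n) :
    ∑ v ∈ nbr G (C.u i) \ nbr G (C.u (i + 1)), ((f v : ℕ) + 1) =
      ∑ v ∈ nbr G (C.u (i + 1 + 2 * r)) \ nbr G (C.u (i + 2 * r)), ((f v : ℕ) + 1) :=
  (Finset.sum_sdiff_eq_sum_sdiff_iff.2 ((hf _).trans (hf _).symm)).trans
    (C.sum_sdiff_add_two_mul_s6 hsub hf r hir)

/-- For a distance magic labeling `f` of `G` and a neighbourhood chain
`N₁ ⋯ N_n` satisfying `N_{i+1} ∖ N_i ⊆ N_{i+2}` and nonemptiness of the set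
differences of consecutive neighbourhoods, the label sums satisfy
`∑_{N_i ∖ N_{i+1}} f = ∑_{N_{i+1+2r} ∖ N_{i+2r}} f` (0-indexed here). -/
theorem chain_sdiff_sums_eq [Fintype V] (G : SimpleGraph V) (n : ℕ)
    (C : NbhChain G n)
    (hsub : ∀ i, i + 2 < n →
      nbr G (C.u (i + 1)) \ nbr G (C.u i) ⊆ nbr G (C.u (i + 2)))
    (hne : ∀ i, i + 1 < n →
      (nbr G (C.u i) \ nbr G (C.u (i + 1))).Nonempty ∧
        (nbr G (C.u (i + 1)) \ nbr G (C.u i)).Nonempty)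
    (f : V ≃ Fin (Fintype.card V)) (S : ℕ)
    (hf : ∀ u : V, ∑ v ∈ nbr G u, ((f v : ℕ) + 1) = S)
    (i r : ℕ) (hir : i + 1 + 2 * r < n) :
    ∑ v ∈ nbr G (C.u i) \ nbr G (C.u (i + 1)), ((f v : ℕ) + 1) =
      ∑ v ∈ nbr G (C.u (i + 1 + 2 * r)) \ nbr G (C.u (i + 2 * r)), ((f v : ℕ) + 1) :=
  chain_sdiff_sums_eq_general G n C hsub f S hf i r hir
end
end

section
/- Let G be a finite simple graph containing a Type-1 neighbourhood chain (NC-T1) of even length 2n (n ≥ 1). Then G is non-distance magic, i.e., admits no distance magic labeling. -/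
open Finset SimpleGraph
open scoped Classical

noncomputable section

variable {V : Type*}

/-!
Write `A i = N i ∩ N (i + 1)`. Condition (ii) together with the disjointness of `N i` and
`N (i + 2)` gives `N (i + 1) \ N i = A (i + 1)`, so every inner neighbourhood splits as
`A i ⊔ A (i + 1)`, while the end neighbourhoods split as `{v 0} ⊔ A 0` and
`A (2n - 2) ⊔ {v (2n - 1)}`. Under a distance magic labeling all these sums equal `S`, hence the
label sums of the `A i` alternate, and since the chain has even length both ends carry the
same label: `f (v 0) = f (v (2n - 1))`, contradicting injectivity.
-/

theorem eq_of_adjacent_sums_eq {M : Type*} [AddCancelCommMonoid M] (a : ℕ → M) (n : ℕ)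
    {S x y : M} (hfirst : x + a 0 = S) (hmid : ∀ i, i + 2 < 2 * n → a i + a (i + 1) = S)
    (hlast : a (2 * n - 2) + y = S) : x = y := by
  have heven : ∀ j, j < n → a (2 * j) = a 0 := by
    intro j
    induction j with
    | zero => intro; rfl
    | succ j ih =>
      intro hj
      have h₁ := hmid (2 * j) (by omega)
      have h₂ := hmid (2 * j + 1) (by omega)
      rw [← ih (by omega)]
      exact add_left_cancel (h₂.trans (h₁.symm.trans (add_comm _ _)))
  have hlast' : a 0 + y = S := by
    rcases Nat.eq_zero_or_pos n with rfl | hn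
    · exact hlast
    · rwa [show 2 * n - 2 = 2 * (n - 1) by omega, heven _ (by omega)] at hlast
  exact add_right_cancel ((hfirst.trans hlast'.symm).trans (add_comm _ _))

namespace NCT1

variable [Fintype V] {G : SimpleGraph V} {k : ℕ} (C : NCT1 G k)
variable {M : Type*} [AddCommMonoid M] (w : V → M)

theorem sum_nbr_first :
    w (C.v 0) + ∑ x ∈ nbr G (C.u 0) ∩ nbr G (C.u 1), w x = ∑ x ∈ nbr G (C.u 0), w x := by
  rw [← sum_inter_add_sum_sdiff (nbr G (C.u 0)) (nbr G (C.u 1)) w, C.first, sum_singleton,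
    add_comm]

theorem sdiff_nbr_eq_inter_nbr {i : ℕ} (hk : 3 < k) (hi : i + 2 < k) :
    nbr G (C.u (i + 1)) \ nbr G (C.u i) = nbr G (C.u (i + 1)) ∩ nbr G (C.u (i + 2)) := by
  refine Subset.antisymm
    (fun x hx => mem_inter.2 ⟨(mem_sdiff.1 hx).1, C.succ_sdiff_sub i hi hx⟩)
    fun x hx => mem_sdiff.2 ⟨(mem_inter.1 hx).1, fun hxi => ?_⟩
  have hdisj := C.nonconsec i (i + 2) hi (by omega) (by omega)
  exact notMem_empty x (hdisj ▸ mem_inter.2 ⟨hxi, (mem_inter.1 hx).2⟩)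

theorem sum_nbr_succ {i : ℕ} (hk : 3 < k) (hi : i + 2 < k) :
    ∑ x ∈ nbr G (C.u i) ∩ nbr G (C.u (i + 1)), w x +
        ∑ x ∈ nbr G (C.u (i + 1)) ∩ nbr G (C.u (i + 2)), w x =
      ∑ x ∈ nbr G (C.u (i + 1)), w x := by
  rw [← sum_inter_add_sum_sdiff (nbr G (C.u (i + 1))) (nbr G (C.u i)) w,
    C.sdiff_nbr_eq_inter_nbr hk hi, inter_comm]

theorem sum_nbr_last :
    ∑ x ∈ nbr G (C.u (k - 2)) ∩ nbr G (C.u (k - 1)), w x + w (C.v (k - 1)) =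
      ∑ x ∈ nbr G (C.u (k - 1)), w x := by
  rw [← sum_inter_add_sum_sdiff (nbr G (C.u (k - 1))) (nbr G (C.u (k - 2))) w, C.last,
    sum_singleton, inter_comm]

theorem v_zero_ne_v_last : C.v 0 ≠ C.v (k - 1) := fun h => by
  have := C.hk
  have := C.hm
  have := C.vinj 0 (k - 1) (by omega) (by omega) h
  omega

end NCT1

theorem nct1_even_length_non_distance_magic_general [Fintype V] (G : SimpleGraph V)
    (n : ℕ) (C : NCT1 G (2 * n)) : ¬ IsDistanceMagic G := by
  rintro ⟨f, S, hS⟩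
  have := C.hk
  set w : V → ℕ := fun v => f v + 1
  have hw : w (C.v 0) = w (C.v (2 * n - 1)) := by
    refine eq_of_adjacent_sums_eq (fun i => ∑ x ∈ nbr G (C.u i) ∩ nbr G (C.u (i + 1)), w x) n
      (S := S) ?_ (fun i hi => ?_) ?_
    · exact (C.sum_nbr_first w).trans (hS _)
    · exact (C.sum_nbr_succ w (by omega) hi).trans (hS _)
    · rw [show 2 * n - 2 + 1 = 2 * n - 1 by omega]
      exact (C.sum_nbr_last w).trans (hS _)
  exact C.v_zero_ne_v_last (f.injective (Fin.ext (Nat.succ_injective hw)))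

/-- A finite simple graph containing a Type-1 neighbourhood chain of
even length `2n` (`n ≥ 1`) is non-distance magic. -/
theorem nct1_even_length_non_distance_magic [Fintype V] (G : SimpleGraph V)
    (n : ℕ) (hn : 1 ≤ n) (C : NCT1 G (2 * n)) : ¬ IsDistanceMagic G :=
  nct1_even_length_non_distance_magic_general G n C
end
end

section
/- For all integers m ≥ 2 and n ≥ 3, the cylindrical grid graph P_m □ C_n contains a Type-2 pair of neighbourhood chains (NC-T2), i.e., two Type-1 neighbourhood chains of equal length forming an NC-T2. -/
open Finset SimpleGraph
open scoped Classical

noncomputable section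

variable {V : Type*}

/-! The two chains are the diagonals `u_i = (i, i)` and `u'_i = (i, i + 2)`, `i < m`, of the
cylinder. Measure a vertex `(r, c)` by its offset `c - r - s ∈ ℤ/n` from the diagonal through
`(0, s)`: the neighbourhood of the diagonal vertex in row `i` consists of the offset `-1` vertices
in rows `i, i + 1` and the offset `+1` vertices in rows `i - 1, i`. As `n ≥ 3` these two offsets
differ, so every chain condition becomes a comparison of row intervals. The diagonals are linked
because offset `+1` for the first is offset `-1` for the second. The vertices `v_j` enumerate the
complement of a diagonal, arranged so that `v_0` and `v_{m-1}` are the prescribed end vertices. -/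

theorem mem_nbr [Fintype V] {G : SimpleGraph V} {u x : V} : x ∈ nbr G u ↔ G.Adj u x :=
  mem_neighborFinset _ _ _

theorem Finset.exists_bijOn_Iio_card_of_pair {α : Type*} (S : Finset α) {a b : ℕ}
    (ha : a < #S) (hb : b < #S) (hab : a ≠ b) {p q : α} (hp : p ∈ S) (hq : q ∈ S)
    (hpq : p ≠ q) :
    ∃ v : ℕ → α, Set.BijOn v (Set.Iio #S) S ∧ v a = p ∧ v b = q := by
  let f : Fin #S → α := fun i => if (i : ℕ) = a then p else q
  obtain ⟨g, hg⟩ := Finset.exists_equiv_extend_of_card_eq (t := S)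
    (s := {⟨a, ha⟩, ⟨b, hb⟩}) (f := f) (by simp) (by simp [f, Finset.subset_iff, hp, hq, hab.symm])
    (by simp [Set.InjOn, f, hab.symm, hpq, hpq.symm])
  let v : ℕ → α := fun j => if h : j < #S then g ⟨j, h⟩ else p
  have hv : ∀ j (h : j < #S), v j = g ⟨j, h⟩ := fun j h => dif_pos h
  refine ⟨v, ⟨fun j hj => ?_, fun i hi j hj hij => ?_, fun x hx => ?_⟩, ?_, ?_⟩
  · rw [hv j hj]; exact (g _).2
  · rw [hv i hi, hv j hj, Subtype.val_inj] at hij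
    exact congrArg Fin.val (g.injective hij)
  · refine ⟨g.symm ⟨x, hx⟩, (g.symm ⟨x, hx⟩).2, ?_⟩
    rw [hv _ (g.symm ⟨x, hx⟩).2]
    simp
  · rw [hv a ha, hg _ (by simp)]; simp [f]
  · rw [hv b hb, hg _ (by simp)]; simp [f, hab.symm]

-- `NCT1` is stated with classical decidable equality; accepting any instance here lets the
-- hypotheses be discharged in concrete vertex types.
theorem NbhChain.exists_nct1 [Fintype V] [DecidableEq V] {G : SimpleGraph V} {k : ℕ}
    (c : NbhChain G k)
    (hstable : ∀ i j, i < k → j < k → ¬ G.Adj (c.u i) (c.u j)) {p q : V} (hpq : p ≠ q)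
    (hfirst : nbr G (c.u 0) \ nbr G (c.u 1) = {p})
    (hlast : nbr G (c.u (k - 1)) \ nbr G (c.u (k - 2)) = {q})
    (hsucc : ∀ i, i + 2 < k → nbr G (c.u (i + 1)) \ nbr G (c.u i) ⊆ nbr G (c.u (i + 2)))
    (hsdiff : ∀ i, i + 1 < k →
      (nbr G (c.u i) \ nbr G (c.u (i + 1))).Nonempty ∧
        (nbr G (c.u (i + 1)) \ nbr G (c.u i)).Nonempty)
    (hcard : 2 * k + 1 ≤ Fintype.card V) :
    ∃ A : NCT1 G k, A.u = c.u := by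
  obtain rfl : ‹DecidableEq V› = fun a b => Classical.propDecidable (a = b) :=
    Subsingleton.elim _ _
  set S : Finset V := univ \ (range k).image c.u
  have hS : ∀ x, x ∈ S ↔ ∀ j < k, c.u j ≠ x := by simp [S]
  have nbr_mem_S : ∀ i < k, ∀ x ∈ nbr G (c.u i), x ∈ S := fun i hi x hx =>
    (hS x).2 fun j hj hjx => hstable i j hi hj (hjx ▸ mem_nbr.1 hx)
  have hcardS : k + 1 ≤ #S := by
    have h := card_image_le (s := range k) (f := c.u)
    rw [card_range] at h
    rw [card_sdiff_of_subset (subset_univ _), card_univ]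
    omega
  have hp : p ∈ S := nbr_mem_S 0 (by have := c.hk; omega) p
    (mem_sdiff.1 (hfirst ▸ mem_singleton_self p)).1
  have hq : q ∈ S := nbr_mem_S (k - 1) (by have := c.hk; omega) q
    (mem_sdiff.1 (hlast ▸ mem_singleton_self q)).1
  obtain ⟨v, hv, hv0, hvk⟩ := S.exists_bijOn_Iio_card_of_pair (a := 0) (b := k - 1)
    (by omega) (by omega) (by have := c.hk; omega) hp hq hpq
  refine ⟨{ c with
    m := #S
    hm := hcardS
    v := v
    vinj := fun i j hi hj h => hv.injOn hi hj h
    disj_uv := fun i j hi hj => ((hS (v j)).1 (hv.mapsTo hj) i hi)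
    nonadj := hstable
    nbh_sub := fun i hi x hx => by
      obtain ⟨j, hj, rfl⟩ := hv.surjOn (nbr_mem_S i hi x hx)
      exact ⟨j, hj, rfl⟩
    nbh_nonempty := fun i hi => by
      by_cases h : i + 1 < k
      · exact (c.consec i h).mono inter_subset_left
      · obtain ⟨j, rfl⟩ : ∃ j, i = j + 1 := ⟨i - 1, by have := c.hk; omega⟩
        exact (c.consec j hi).mono inter_subset_right
    first := by rw [hv0, hfirst]
    last := by rw [hvk, hlast]
    succ_sdiff_sub := hsucc
    sdiff_nonempty := hsdiff }, rfl⟩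

section CylinderGrid

open Fin.CommRing

variable {m n : ℕ} [NeZero n]

def diagOffset (s : Fin n) (x : Fin m × Fin n) : Fin n :=
  x.2 - ((x.1 : ℕ) : Fin n) - s

lemma diagOffset_add (s t : Fin n) (x : Fin m × Fin n) :
    diagOffset (s + t) x = diagOffset s x - t := by
  simp only [diagOffset]
  ring

lemma Fin.neg_one_ne_one (hn : 3 ≤ n) : (-1 : Fin n) ≠ 1 := by
  intro h
  have h2 : ((2 : ℕ) : Fin n) = 0 := by
    push_cast
    linear_combination -h
  rw [Fin.natCast_eq_zero] at h2
  exact absurd (Nat.le_of_dvd two_pos h2) (by omega)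

variable [NeZero m]

def diagCell (s : Fin n) (i : ℕ) (e : Fin n) : Fin m × Fin n :=
  ((i : Fin m), (i : Fin n) + s + e)

lemma diagCell_fst_val (s e : Fin n) {i : ℕ} (hi : i < m) :
    ((diagCell s i e : Fin m × Fin n).1 : ℕ) = i := by
  simp [diagCell, Fin.val_natCast, Nat.mod_eq_of_lt hi]

lemma diagOffset_diagCell (s e : Fin n) {i : ℕ} (hi : i < m) :
    diagOffset s (diagCell s i e : Fin m × Fin n) = e := by
  rw [diagOffset, diagCell_fst_val s e hi]
  simp only [diagCell]
  ring

lemma eq_diagCell_iff {s e : Fin n} {i : ℕ} (hi : i < m) (x : Fin m × Fin n) :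
    x = diagCell s i e ↔ (x.1 : ℕ) = i ∧ diagOffset s x = e := by
  constructor
  · rintro rfl
    exact ⟨diagCell_fst_val s e hi, diagOffset_diagCell s e hi⟩
  · rintro ⟨hx, rfl⟩
    refine Prod.ext (Fin.ext ?_) ?_
    · rw [diagCell_fst_val _ _ hi, hx]
    · simp only [diagCell, diagOffset, hx]
      ring

lemma mem_nbr_diagCell_zero (hn : 2 ≤ n) (s : Fin n) {i : ℕ} (hi : i < m)
    (x : Fin m × Fin n) :
    x ∈ nbr (pathGraph m □ cycleGraph n) (diagCell s i 0) ↔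
      (diagOffset s x = -1 ∧ ((x.1 : ℕ) = i ∨ (x.1 : ℕ) = i + 1)) ∨
        (diagOffset s x = 1 ∧ ((x.1 : ℕ) + 1 = i ∨ (x.1 : ℕ) = i)) := by
  obtain ⟨k, rfl⟩ : ∃ k, n = k + 2 := ⟨n - 2, by omega⟩
  obtain ⟨⟨r, hr⟩, c⟩ := x
  have hc : c = diagOffset s (⟨r, hr⟩, c) + r + s := by
    simp only [diagOffset]
    ring
  generalize diagOffset s (⟨r, hr⟩, c) = e at hc ⊢
  subst hc
  have hrow : (diagCell s i 0 : Fin m × Fin (k + 2)).1 = ⟨r, hr⟩ ↔ r = i := by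
    rw [Fin.ext_iff, diagCell_fst_val _ _ hi, eq_comm]
  rw [mem_nbr, boxProd_adj, pathGraph_adj, cycleGraph_adj, hrow,
    diagCell_fst_val _ _ hi]
  simp only [diagCell, add_zero]
  constructor
  · rintro (⟨rfl | rfl, h⟩ | ⟨h | h, rfl⟩)
    · left
      push_cast at h
      exact ⟨by linear_combination -h, Or.inr rfl⟩
    · right
      push_cast at h
      exact ⟨by linear_combination -h, Or.inl rfl⟩
    · exact Or.inl ⟨by linear_combination -h, Or.inl rfl⟩
    · exact Or.inr ⟨by linear_combination h, Or.inr rfl⟩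
  · rintro (⟨rfl, rfl | rfl⟩ | ⟨rfl, rfl | rfl⟩)
    · exact Or.inr ⟨Or.inl (by ring), rfl⟩
    · exact Or.inl ⟨Or.inl rfl, by push_cast; ring⟩
    · exact Or.inl ⟨Or.inr rfl, by push_cast; ring⟩
    · exact Or.inr ⟨Or.inr (by ring), rfl⟩

def diagChain (hm : 2 ≤ m) (hn : 3 ≤ n) (s : Fin n) :
    NbhChain (pathGraph m □ cycleGraph n) m where
  hk := hm
  u i := diagCell s i 0
  inj i j hi hj h := by
    rw [← diagCell_fst_val s 0 hi, ← diagCell_fst_val s 0 hj, h]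
  consec i hi := ⟨diagCell s i 1, by
    simp only [mem_inter]
    rw [mem_nbr_diagCell_zero (by omega) s (by omega),
      mem_nbr_diagCell_zero (by omega) s hi, diagOffset_diagCell s 1 (by omega),
      diagCell_fst_val s 1 (by omega)]
    omega⟩
  nonconsec i j hj hij _ := by
    refine eq_empty_iff_forall_notMem.2 fun x => ?_
    simp only [mem_inter]
    rw [mem_nbr_diagCell_zero (by omega) s (by omega),
      mem_nbr_diagCell_zero (by omega) s hj]
    grind [Fin.neg_one_ne_one hn]

lemma not_adj_diagCell_zero (hn : 3 ≤ n) (s : Fin n) {i j : ℕ} (hi : i < m) (hj : j < m) :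
    ¬ (pathGraph m □ cycleGraph n).Adj (diagCell s i 0) (diagCell s j 0) := by
  rw [← mem_nbr, mem_nbr_diagCell_zero (by omega) s hi, diagOffset_diagCell s 0 hj]
  grind [Fin.neg_one_ne_one hn]

lemma nbr_diagCell_sdiff_first (hm : 2 ≤ m) (hn : 3 ≤ n) (s : Fin n) :
    nbr (pathGraph m □ cycleGraph n) (diagCell s 0 0) \
      nbr (pathGraph m □ cycleGraph n) (diagCell s 1 0) = {diagCell s 0 (-1)} := by
  ext x
  simp only [mem_sdiff, mem_singleton]
  rw [mem_nbr_diagCell_zero (by omega) s (by omega), mem_nbr_diagCell_zero (by omega) s hm,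
    eq_diagCell_iff (by omega)]
  grind [Fin.neg_one_ne_one hn]

lemma nbr_diagCell_sdiff_last (hm : 2 ≤ m) (hn : 3 ≤ n) (s : Fin n) :
    nbr (pathGraph m □ cycleGraph n) (diagCell s (m - 1) 0) \
      nbr (pathGraph m □ cycleGraph n) (diagCell s (m - 2) 0) = {diagCell s (m - 1) 1} := by
  ext x
  simp only [mem_sdiff, mem_singleton]
  rw [mem_nbr_diagCell_zero (by omega) s (by omega), mem_nbr_diagCell_zero (by omega) s (by omega),
    eq_diagCell_iff (by omega)]
  grind [Fin.neg_one_ne_one hn]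

lemma nbr_diagCell_succ_sdiff_subset (hn : 3 ≤ n) (s : Fin n) {i : ℕ} (hi : i + 2 < m) :
    nbr (pathGraph m □ cycleGraph n) (diagCell s (i + 1) 0) \
      nbr (pathGraph m □ cycleGraph n) (diagCell s i 0) ⊆
        nbr (pathGraph m □ cycleGraph n) (diagCell s (i + 2) 0) := by
  intro x
  simp only [mem_sdiff]
  rw [mem_nbr_diagCell_zero (by omega) s (by omega), mem_nbr_diagCell_zero (by omega) s (by omega),
    mem_nbr_diagCell_zero (by omega) s hi]
  grind [Fin.neg_one_ne_one hn]

lemma nbr_diagCell_sdiff_nonempty (hn : 3 ≤ n) (s : Fin n) {i : ℕ} (hi : i + 1 < m) :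
    (nbr (pathGraph m □ cycleGraph n) (diagCell s i 0) \
        nbr (pathGraph m □ cycleGraph n) (diagCell s (i + 1) 0)).Nonempty ∧
      (nbr (pathGraph m □ cycleGraph n) (diagCell s (i + 1) 0) \
        nbr (pathGraph m □ cycleGraph n) (diagCell s i 0)).Nonempty := by
  refine ⟨⟨diagCell s i (-1), ?_⟩, ⟨diagCell s (i + 1) 1, ?_⟩⟩
  all_goals
    simp only [mem_sdiff]
    rw [mem_nbr_diagCell_zero (i := i) (by omega) s (by omega),
      mem_nbr_diagCell_zero (by omega) s hi, diagOffset_diagCell _ _ (by omega),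
      diagCell_fst_val _ _ (by omega)]
    grind [Fin.neg_one_ne_one hn]

theorem exists_nct1_diag (hm : 2 ≤ m) (hn : 3 ≤ n) (s : Fin n) :
    ∃ A : NCT1 (pathGraph m □ cycleGraph n) m, A.u = fun i => diagCell s i 0 := by
  have hpq : diagCell s 0 (-1) ≠ (diagCell s (m - 1) 1 : Fin m × Fin n) := by
    rw [Ne, eq_diagCell_iff (by omega), diagCell_fst_val s _ (by omega)]
    omega
  have hcard : 2 * m + 1 ≤ Fintype.card (Fin m × Fin n) := by
    simp only [Fintype.card_prod, Fintype.card_fin]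
    nlinarith
  exact (diagChain hm hn s).exists_nct1 (fun i j hi hj => not_adj_diagCell_zero hn s hi hj) hpq
    (nbr_diagCell_sdiff_first hm hn s) (nbr_diagCell_sdiff_last hm hn s)
    (fun i hi => nbr_diagCell_succ_sdiff_subset hn s hi)
    (fun i hi => nbr_diagCell_sdiff_nonempty hn s hi) hcard

lemma nbr_diagCell_link_first (hm : 2 ≤ m) (hn : 3 ≤ n) (s : Fin n) :
    nbr (pathGraph m □ cycleGraph n) (diagCell s 0 0) ∩
        nbr (pathGraph m □ cycleGraph n) (diagCell s 1 0) ∩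
        nbr (pathGraph m □ cycleGraph n) (diagCell (s + 2) 0 0) =
      nbr (pathGraph m □ cycleGraph n) (diagCell (s + 2) 0 0) \
        nbr (pathGraph m □ cycleGraph n) (diagCell (s + 2) 1 0) := by
  ext x
  simp only [mem_sdiff, mem_inter]
  rw [mem_nbr_diagCell_zero (by omega) s (by omega), mem_nbr_diagCell_zero (by omega) s hm,
    mem_nbr_diagCell_zero (by omega) _ (by omega), mem_nbr_diagCell_zero (by omega) _ hm,
    diagOffset_add]
  grind [Fin.neg_one_ne_one hn]

lemma nbr_diagCell_link_last (hm : 2 ≤ m) (hn : 3 ≤ n) (s : Fin n) :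
    nbr (pathGraph m □ cycleGraph n) (diagCell s (m - 1) 0) ∩
        nbr (pathGraph m □ cycleGraph n) (diagCell (s + 2) (m - 1) 0) ∩
        nbr (pathGraph m □ cycleGraph n) (diagCell (s + 2) (m - 2) 0) =
      nbr (pathGraph m □ cycleGraph n) (diagCell s (m - 1) 0) \
        nbr (pathGraph m □ cycleGraph n) (diagCell s (m - 2) 0) := by
  ext x
  simp only [mem_sdiff, mem_inter]
  rw [mem_nbr_diagCell_zero (by omega) s (by omega), mem_nbr_diagCell_zero (by omega) s (by omega),
    mem_nbr_diagCell_zero (by omega) _ (by omega), mem_nbr_diagCell_zero (by omega) _ (by omega),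
    diagOffset_add]
  grind [Fin.neg_one_ne_one hn]

lemma nbr_diagCell_link_nonempty (hn : 3 ≤ n) (s : Fin n) {i : ℕ} (hi₀ : 1 ≤ i)
    (hi : i + 1 < m) :
    (nbr (pathGraph m □ cycleGraph n) (diagCell s i 0) ∩
        nbr (pathGraph m □ cycleGraph n) (diagCell s (i + 1) 0) ∩
        nbr (pathGraph m □ cycleGraph n) (diagCell (s + 2) i 0) ∩
        nbr (pathGraph m □ cycleGraph n) (diagCell (s + 2) (i - 1) 0)).Nonempty := by
  refine ⟨diagCell s i 1, ?_⟩
  simp only [mem_inter]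
  rw [mem_nbr_diagCell_zero (by omega) s (by omega), mem_nbr_diagCell_zero (by omega) s hi,
    mem_nbr_diagCell_zero (by omega) _ (by omega), mem_nbr_diagCell_zero (by omega) _ (by omega),
    diagOffset_add, diagOffset_diagCell _ _ (by omega), diagCell_fst_val _ _ (by omega)]
  grind

end CylinderGrid

/-- For `m ≥ 2`, `n ≥ 3`, the cylindrical grid graph `P_m □ C_n`
contains a Type-2 pair of neighbourhood chains (two NC-T1 of equal length). -/
theorem grid_contains_nct2 (m n : ℕ) (hm : 2 ≤ m) (hn : 3 ≤ n) :
    ∃ k : ℕ, Nonempty (NCT2 (SimpleGraph.pathGraph m □ SimpleGraph.cycleGraph n) k) := by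
  have : NeZero m := ⟨by omega⟩
  have : NeZero n := ⟨by omega⟩
  obtain ⟨A, hA⟩ := exists_nct1_diag hm hn 0
  obtain ⟨B, hB⟩ := exists_nct1_diag hm hn (0 + 2)
  refine ⟨m, ⟨A, B, ?_, by rw [B.first]; exact singleton_nonempty _, ?_,
    by rw [A.last]; exact singleton_nonempty _, fun i hi₀ hi => ?_⟩⟩
  all_goals simp only [hA, hB]
  -- `convert` reconciles the classical `DecidableEq` in `NCT2` with that of `Fin m × Fin n`.
  · convert nbr_diagCell_link_first hm hn 0
  · convert nbr_diagCell_link_last hm hn 0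
  · convert nbr_diagCell_link_nonempty hn 0 hi₀ hi
end
end

section
/- For every integer m ≥ 2, the graphs P_m □ C_3 and P_m □ C_4 (Cartesian products of the path on m vertices with the cycles on 3 and 4 vertices) are non-distance magic, i.e., admit no distance magic labeling. -/
open Finset SimpleGraph
open scoped Classical

noncomputable section

variable {V : Type*}

/-!
Under a distance magic labeling with constant `S`, the labels on a union of `k` pairwise disjoint
open neighbourhoods add up to `k * S`. Hence two families of `k` vertices with pairwise disjoint
neighbourhoods, whose neighbourhood unions differ by a single vertex on each side, would force these
two vertices to share a label. In `P_m □ C₄` take `(0,0)` and `(0,2)`; in the prism `P_2 □ C₃` take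
`(0,0)` and `(1,1)`; in `P_m □ C₃` with `m ≥ 3` take `{(0,0), (1,0)}` and `{(0,1), (1,1)}`, whose
neighbourhoods cover the first two layers together with `(2,0)`, resp. `(2,1)`.
-/

section DistanceMagic

variable [Fintype V] {G : SimpleGraph V}

theorem not_isDistanceMagic_of_sdiff_biUnion_nbr {s t : Finset V} (hcard : #s = #t)
    (hs : (s : Set V).PairwiseDisjoint (nbr G)) (ht : (t : Set V).PairwiseDisjoint (nbr G))
    {a b : V} (ha : s.biUnion (nbr G) \ t.biUnion (nbr G) = {a})
    (hb : t.biUnion (nbr G) \ s.biUnion (nbr G) = {b}) :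
    ¬ IsDistanceMagic G := by
  rintro ⟨f, S, hf⟩
  have hsum : ∀ r : Finset V, (r : Set V).PairwiseDisjoint (nbr G) →
      ∑ x ∈ r.biUnion (nbr G), ((f x : ℕ) + 1) = #r * S := fun r hr => by
    simp [sum_biUnion hr, hf]
  have hab := sum_sdiff_eq_sum_sdiff_iff.mpr ((hsum s hs).trans (hcard ▸ (hsum t ht).symm))
  rw [ha, hb, sum_singleton, sum_singleton] at hab
  have ha' : a ∈ s.biUnion (nbr G) := (mem_sdiff.mp (ha ▸ mem_singleton_self a)).1
  have hb' : b ∉ s.biUnion (nbr G) := (mem_sdiff.mp (hb ▸ mem_singleton_self b)).2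
  have hfab : f a = f b := Fin.ext (by omega)
  exact hb' (f.injective hfab ▸ ha')

theorem not_isDistanceMagic_of_nbr_sdiff {u v a b : V} (ha : nbr G u \ nbr G v = {a})
    (hb : nbr G v \ nbr G u = {b}) : ¬ IsDistanceMagic G :=
  not_isDistanceMagic_of_sdiff_biUnion_nbr (s := {u}) (t := {v}) rfl
    (by simp) (by simp) (by simpa using ha) (by simpa using hb)

theorem not_isDistanceMagic_of_nbr_union_sdiff {u₁ u₂ v₁ v₂ a b : V} (hu : u₁ ≠ u₂) (hv : v₁ ≠ v₂)
    (hdu : Disjoint (nbr G u₁) (nbr G u₂)) (hdv : Disjoint (nbr G v₁) (nbr G v₂))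
    (ha : (nbr G u₁ ∪ nbr G u₂) \ (nbr G v₁ ∪ nbr G v₂) = {a})
    (hb : (nbr G v₁ ∪ nbr G v₂) \ (nbr G u₁ ∪ nbr G u₂) = {b}) : ¬ IsDistanceMagic G :=
  not_isDistanceMagic_of_sdiff_biUnion_nbr (s := {u₁, u₂}) (t := {v₁, v₂})
    (by rw [card_pair hu, card_pair hv]) (by simpa [Set.pairwiseDisjoint_insert, hu] using hdu)
    (by simpa [Set.pairwiseDisjoint_insert, hv] using hdv) (by simpa using ha) (by simpa using hb)

end DistanceMagic

section Grid

variable {m : ℕ}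

theorem not_isDistanceMagic_pathGraph_boxProd_cycleGraph_four (hm : 2 ≤ m) :
    ¬ IsDistanceMagic (pathGraph m □ cycleGraph 4) := by
  apply not_isDistanceMagic_of_nbr_sdiff (u := (⟨0, by omega⟩, 0)) (v := (⟨0, by omega⟩, 2))
    (a := (⟨1, by omega⟩, 0)) (b := (⟨1, by omega⟩, 2)) <;>
  · ext ⟨⟨i, hi⟩, j⟩
    fin_cases j <;> simp +decide [nbr, boxProd_adj, pathGraph_adj, cycleGraph_adj]
    omega

theorem not_isDistanceMagic_pathGraph_two_boxProd_cycleGraph_three :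
    ¬ IsDistanceMagic (pathGraph 2 □ cycleGraph 3) := by
  apply not_isDistanceMagic_of_nbr_sdiff (u := (0, 0)) (v := (1, 1)) (a := (0, 2)) (b := (1, 2)) <;>
  · ext ⟨i, j⟩
    fin_cases i <;> fin_cases j <;> simp +decide [nbr, boxProd_adj, pathGraph_adj]

theorem not_isDistanceMagic_pathGraph_boxProd_cycleGraph_three (hm : 3 ≤ m) :
    ¬ IsDistanceMagic (pathGraph m □ cycleGraph 3) := by
  apply not_isDistanceMagic_of_nbr_union_sdiff (u₁ := (⟨0, by omega⟩, 0)) (u₂ := (⟨1, by omega⟩, 0))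
    (v₁ := (⟨0, by omega⟩, 1)) (v₂ := (⟨1, by omega⟩, 1))
    (a := (⟨2, by omega⟩, 0)) (b := (⟨2, by omega⟩, 1))
  case hu | hv => simp
  case hdu | hdv =>
    rw [Finset.disjoint_left]
    rintro ⟨⟨i, hi⟩, j⟩
    fin_cases j <;> simp +decide [nbr, boxProd_adj, pathGraph_adj, cycleGraph_adj] <;> omega
  case ha | hb =>
    ext ⟨⟨i, hi⟩, j⟩
    fin_cases j <;> simp +decide [nbr, boxProd_adj, pathGraph_adj, cycleGraph_adj] <;> omega

end Grid

/-- For `m ≥ 2`, the graphs `P_m □ C₃` and `P_m □ C₄` are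
non-distance magic. -/
theorem grid_c3_c4_non_distance_magic (m : ℕ) (hm : 2 ≤ m) :
    ¬ IsDistanceMagic (SimpleGraph.pathGraph m □ SimpleGraph.cycleGraph 3) ∧
      ¬ IsDistanceMagic (SimpleGraph.pathGraph m □ SimpleGraph.cycleGraph 4) := by
  refine ⟨?_, not_isDistanceMagic_pathGraph_boxProd_cycleGraph_four hm⟩
  obtain rfl | hm3 := hm.eq_or_lt
  · exact not_isDistanceMagic_pathGraph_two_boxProd_cycleGraph_three
  · exact not_isDistanceMagic_pathGraph_boxProd_cycleGraph_three hm3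
end
end

section
/- For all integers k ≥ 1 and n ≥ 3, the graph P_{2k} □ C_n (the Cartesian product of the path on 2k vertices with the cycle on n vertices) is non-distance magic, i.e., admits no distance magic labeling. -/
open Finset SimpleGraph
open scoped Classical

noncomputable section

variable {V : Type*}

/-! Extend a labelling `w` of `P_m □ C_n` by zero to all rows `a ∈ ℤ`; then every vertex
equation has the same shape. The vertices `(a, j+1)` and `(a+1, j+2)` have the two common
neighbours `(a+1, j+1)` and `(a, j+2)`, so subtracting their equations shows that the pair sum
`w(a, j) + w(a-1, j+1)` is unchanged by the shift `(a, j) ↦ (a+2, j+2)`. For `m = 2k`, shifting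
`k` times carries row `0`, where the pair sum is the single label `w(0, j)`, to row `2k`, where
it is the single label `w(2k-1, j')`; so two distinct vertices have the same label. -/

variable {α : Type*}

def HasConstNbrSum [Fintype V] [AddCommMonoid α] (G : SimpleGraph V) (w : V → α) (S : α) :
    Prop :=
  ∀ u, ∑ v ∈ nbr G u, w v = S

lemma not_isDistanceMagic_of_not_injective [Fintype V] {G : SimpleGraph V}
    (h : ∀ (w : V → ℕ) (S : ℕ), HasConstNbrSum G w S → ¬ Function.Injective w) :
    ¬ IsDistanceMagic G := by
  rintro ⟨f, S, hS⟩
  exact h (fun v => f v + 1) S hS fun u v huv =>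
    f.injective (Fin.val_injective (Nat.add_right_cancel huv))

section Zero

variable [Zero α]

def zeroExtend {m : ℕ} (g : Fin m → α) (i : ℤ) : α :=
  if h : 0 ≤ i ∧ i < m then g ⟨i.toNat, by omega⟩ else 0

lemma zeroExtend_natCast {m i : ℕ} (g : Fin m → α) (h : i < m) :
    zeroExtend g (i : ℤ) = g ⟨i, h⟩ := by
  simp [zeroExtend, h]

lemma zeroExtend_of_neg {m : ℕ} (g : Fin m → α) {i : ℤ} (h : i < 0) :
    zeroExtend g i = 0 := by
  simp [zeroExtend]
  omega

lemma zeroExtend_of_le {m : ℕ} (g : Fin m → α) {i : ℤ} (h : m ≤ i) :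
    zeroExtend g i = 0 := by
  simp [zeroExtend]
  omega

end Zero

section AddCommMonoid

variable [AddCommMonoid α]

lemma zeroExtend_eq_sum {m : ℕ} (g : Fin m → α) (i : ℤ) :
    zeroExtend g i = ∑ r : Fin m, if (r : ℤ) = i then g r else 0 := by
  unfold zeroExtend
  split_ifs with h
  · rw [Fintype.sum_eq_single ⟨i.toNat, by omega⟩]
    · rw [if_pos (Int.toNat_of_nonneg h.1)]
    · intro r hr
      rw [if_neg]
      contrapose! hr
      ext
      simp only
      omega
  · refine (sum_eq_zero fun r _ => if_neg ?_).symm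
    omega

lemma sum_nbr_boxProd {β γ : Type*} [Fintype β] [Fintype γ] (G : SimpleGraph β)
    (H : SimpleGraph γ) (w : β × γ → α) (x : β × γ) :
    ∑ v ∈ nbr (G □ H) x, w v =
      ∑ b ∈ nbr G x.1, w (b, x.2) + ∑ c ∈ nbr H x.2, w (x.1, c) := by
  rw [nbr, neighborFinset_boxProd, sum_disjUnion, sum_product, sum_product_right]
  simp [nbr]

lemma sum_nbr_pathGraph {m : ℕ} (g : Fin m → α) (i : Fin m) :
    ∑ r ∈ nbr (pathGraph m) i, g r = zeroExtend g (i - 1) + zeroExtend g (i + 1) := by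
  rw [zeroExtend_eq_sum, zeroExtend_eq_sum, ← sum_add_distrib, nbr, neighborFinset_eq_filter,
    sum_filter]
  refine sum_congr rfl fun r _ => ?_
  rw [pathGraph_adj]
  split_ifs <;> first | omega | simp

lemma sum_nbr_cycleGraph {n : ℕ} (g : Fin (n + 3) → α) (j : Fin (n + 3)) :
    ∑ v ∈ nbr (cycleGraph (n + 3)) j, g v = g (j - 1) + g (j + 1) := by
  have hne : j - 1 ≠ j + 1 := by
    intro h
    have htwo : (1 + 1 : Fin (n + 3)) = 0 := by
      have := congrArg (· + 1) h
      simp only [sub_add_cancel, add_assoc] at this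
      simpa using this.symm
    simp [Fin.ext_iff, Fin.val_add, Nat.mod_eq_of_lt (show 2 < n + 3 by omega)] at htwo
  have hnbr : nbr (cycleGraph (n + 3)) j = {j - 1, j + 1} := by
    ext v
    rw [nbr, mem_neighborFinset, ← mem_neighborSet, cycleGraph_neighborSet]
    simp
  rw [hnbr, sum_pair hne]

end AddCommMonoid

section Grid

variable [AddCancelCommMonoid α] {m n : ℕ} {w : Fin m × Fin (n + 3) → α} {S : α}

def zeroExtendRows {β : Type*} (w : Fin m × β → α) (a : ℤ) (j : β) : α :=
  zeroExtend (fun r => w (r, j)) a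

def diagPairSum (w : Fin m × Fin (n + 3) → α) (a : ℤ) (j : Fin (n + 3)) : α :=
  zeroExtendRows w a j + zeroExtendRows w (a - 1) (j + 1)

lemma grid_vertex_eq (hw : HasConstNbrSum (pathGraph m □ cycleGraph (n + 3)) w S)
    (i : Fin m) (j : Fin (n + 3)) :
    zeroExtendRows w (i - 1) j + zeroExtendRows w (i + 1) j +
      (zeroExtendRows w i (j - 1) + zeroExtendRows w i (j + 1)) = S := by
  rw [← hw (i, j), sum_nbr_boxProd, sum_nbr_pathGraph, sum_nbr_cycleGraph]
  simp only [zeroExtendRows, zeroExtend_natCast _ i.isLt]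

lemma diagPairSum_eq_add_two (hw : HasConstNbrSum (pathGraph m □ cycleGraph (n + 3)) w S)
    {a : ℕ} (ha : a + 1 < m) (j : Fin (n + 3)) :
    diagPairSum w a j = diagPairSum w (a + 1 + 1) (j + 1 + 1) := by
  have h1 := grid_vertex_eq hw ⟨a, by omega⟩ (j + 1)
  have h2 := grid_vertex_eq hw ⟨a + 1, ha⟩ (j + 1 + 1)
  simp only [add_sub_cancel_right, Nat.cast_add, Nat.cast_one] at h1 h2
  apply add_right_cancel (b := zeroExtendRows w (a + 1) (j + 1) + zeroExtendRows w a (j + 1 + 1))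
  calc _ = _ := by simp only [diagPairSum]; abel
    _ = S := h1
    _ = _ := h2.symm
    _ = _ := by simp only [diagPairSum, add_sub_cancel_right]; abel

lemma exists_diagPairSum_zero_eq (hw : HasConstNbrSum (pathGraph m □ cycleGraph (n + 3)) w S)
    (j : Fin (n + 3)) {t : ℕ} (ht : 2 * t ≤ m) :
    ∃ j', diagPairSum w 0 j = diagPairSum w (2 * t : ℕ) j' := by
  induction t with
  | zero => exact ⟨j, by simp⟩
  | succ t ih =>
    obtain ⟨j', hj'⟩ := ih (by omega)
    refine ⟨j' + 1 + 1, ?_⟩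
    have hrow : ((2 * t : ℕ) : ℤ) + 1 + 1 = ((2 * (t + 1) : ℕ) : ℤ) := by push_cast; ring
    rw [hj', diagPairSum_eq_add_two hw (by omega), hrow]

lemma diagPairSum_zero (hm : 0 < m) (j : Fin (n + 3)) : diagPairSum w 0 j = w (⟨0, hm⟩, j) := by
  rw [diagPairSum, zeroExtendRows, zeroExtendRows,
    zeroExtend_of_neg _ (show (0 : ℤ) - 1 < 0 by norm_num), add_zero, ← Nat.cast_zero,
    zeroExtend_natCast _ hm]

lemma diagPairSum_natCast_self (hm : 0 < m) (j : Fin (n + 3)) :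
    diagPairSum w m j = w (⟨m - 1, by omega⟩, j + 1) := by
  have hcast : (m : ℤ) - 1 = ((m - 1 : ℕ) : ℤ) := by omega
  rw [diagPairSum, zeroExtendRows, zeroExtendRows, zeroExtend_of_le _ le_rfl, zero_add, hcast,
    zeroExtend_natCast]

lemma not_injective_of_pathGraph_even {k : ℕ} (hk : 1 ≤ k)
    {w : Fin (2 * k) × Fin (n + 3) → α}
    (hw : HasConstNbrSum (pathGraph (2 * k) □ cycleGraph (n + 3)) w S) :
    ¬ Function.Injective w := by
  intro hinj
  obtain ⟨j, hj⟩ := exists_diagPairSum_zero_eq hw 0 le_rfl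
  rw [diagPairSum_zero (by omega), diagPairSum_natCast_self (by omega)] at hj
  have := congrArg (fun x => (x.1 : ℕ)) (hinj hj)
  simp at this
  omega

end Grid

/-- For `k ≥ 1` and `n ≥ 3`, the graph `P_{2k} □ C_n` is
non-distance magic. -/
theorem grid_even_path_non_distance_magic (k n : ℕ) (hk : 1 ≤ k) (hn : 3 ≤ n) :
    ¬ IsDistanceMagic (SimpleGraph.pathGraph (2 * k) □ SimpleGraph.cycleGraph n) := by
  obtain ⟨n, rfl⟩ := Nat.exists_eq_add_of_le' hn
  exact not_isDistanceMagic_of_not_injective fun _ _ hw => not_injective_of_pathGraph_even hk hw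
end
end

section
/- Let G₁ and G₂ be finite simple graphs on disjoint vertex sets such that G₁ contains a Type-3 pair of neighbourhood chains (NC-T3). Then the disjoint union G₁ ∪ G₂ is non-distance magic, i.e., admits no distance magic labeling. -/
open Finset SimpleGraph
open scoped Classical

noncomputable section

variable {V : Type*}

/-!
Every open neighbourhood of a vertex of `G₁` has the same label sum `S` in `G₁ ⊕g G₂`; write
`w` for label sums. Along a chain with property (i), `N_s` and `N_{s+2}` are disjoint, so
`N_{s+1} ∖ N_{s+2} = N_{s+1} ∩ N_s` and the weights `X_s = w(N_s ∖ N_{s+1})` satisfy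
`X_{s+1} + X_s = w(N_s) = S`; hence they are 2-periodic. Also `w(N_{s+1} ∖ N_s) = X_s`, since
`w(N_s) = w(N_{s+1})`. Property (ii) then gives
`X²_j ≤ X¹_i = w(N¹_{i+1+2r} ∖ N¹_{i+2r}) ≤ w(N²_{j+1+2r} ∖ N²_{j+2r}) = X²_j`, and as labels are
positive both inclusions of (ii) are equalities, contradicting its cardinality condition.
-/

section Weights

variable {W M : Type*} [DecidableEq W]

theorem Finset.sum_sdiff_add_sum_sdiff_of_subset_of_disjoint [AddCommMonoid M] (f : W → M)
    {A B C : Finset W} (hBA : B \ A ⊆ C) (hAC : Disjoint A C) :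
    ∑ x ∈ B \ C, f x + ∑ x ∈ A \ B, f x = ∑ x ∈ A, f x := by
  have hB : B \ C = A ∩ B := by
    ext x
    simp only [mem_sdiff, mem_inter]
    refine ⟨fun ⟨hxB, hxC⟩ => ⟨?_, hxB⟩, fun ⟨hxA, hxB⟩ => ⟨hxB, disjoint_left.1 hAC hxA⟩⟩
    by_contra hxA
    exact hxC (hBA (mem_sdiff.2 ⟨hxB, hxA⟩))
  rw [hB, sum_inter_add_sum_sdiff]

theorem Finset.sum_add_card_sdiff_le_sum (f : W → ℕ) (hf : ∀ x, 0 < f x)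
    {A B : Finset W} (hAB : A ⊆ B) :
    ∑ x ∈ A, f x + #(B \ A) ≤ ∑ x ∈ B, f x := by
  have hcard : #(B \ A) ≤ ∑ x ∈ B \ A, f x := by
    simpa using card_nsmul_le_sum (B \ A) f 1 fun x _ => hf x
  have := sum_sdiff (f := f) hAB
  omega

end Weights

namespace NbhChain

variable {V M : Type*} [Fintype V] {G : SimpleGraph V} {k : ℕ} (c : NbhChain G k)

theorem disjoint_nbr_add_two_s11 (hk : 3 < k) {s : ℕ} (hs : s + 2 < k) :
    Disjoint (nbr G (c.u s)) (nbr G (c.u (s + 2))) :=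
  disjoint_iff_inter_eq_empty.2 (c.nonconsec s (s + 2) hs (by omega) (by omega))

variable [AddCancelCommMonoid M] {f : V → M} {S : M}
  (hS : ∀ v, ∑ x ∈ nbr G v, f x = S)
  (hI : ∀ i, i + 2 < k → nbr G (c.u (i + 1)) \ nbr G (c.u i) ⊆ nbr G (c.u (i + 2)))
include hS hI

theorem sum_sdiff_add_two_eq {s : ℕ} (hs : s + 3 < k) :
    ∑ x ∈ nbr G (c.u (s + 2)) \ nbr G (c.u (s + 3)), f x =
      ∑ x ∈ nbr G (c.u s) \ nbr G (c.u (s + 1)), f x := by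
  have step (t : ℕ) (ht : t + 2 < k) :
      ∑ x ∈ nbr G (c.u (t + 1)) \ nbr G (c.u (t + 2)), f x +
        ∑ x ∈ nbr G (c.u t) \ nbr G (c.u (t + 1)), f x = S :=
    (Finset.sum_sdiff_add_sum_sdiff_of_subset_of_disjoint f (hI t ht)
      (c.disjoint_nbr_add_two_s11 (by omega) ht)).trans (hS _)
  have h₀ := step s (by omega)
  rw [add_comm] at h₀
  exact add_right_cancel ((step (s + 1) (by omega)).trans h₀.symm)

theorem sum_sdiff_add_two_mul_eq (i : ℕ) {t : ℕ} (ht : i + 2 * t + 1 < k) :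
    ∑ x ∈ nbr G (c.u (i + 2 * t)) \ nbr G (c.u (i + 2 * t + 1)), f x =
      ∑ x ∈ nbr G (c.u i) \ nbr G (c.u (i + 1)), f x := by
  induction t with
  | zero => rfl
  | succ t ih =>
    rw [← ih (by omega)]
    exact c.sum_sdiff_add_two_eq hS hI (s := i + 2 * t) (by omega)

theorem sum_sdiff_succ_add_two_mul_eq (i : ℕ) {t : ℕ} (ht : i + 1 + 2 * t < k) :
    ∑ x ∈ nbr G (c.u (i + 1 + 2 * t)) \ nbr G (c.u (i + 2 * t)), f x =
      ∑ x ∈ nbr G (c.u i) \ nbr G (c.u (i + 1)), f x := by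
  rw [← c.sum_sdiff_add_two_mul_eq hS hI i (t := t) (by omega), add_right_comm,
    Finset.sum_sdiff_eq_sum_sdiff_iff, hS, hS]

end NbhChain

theorem NCT3.not_exists_nbr_sum_eq {V : Type*} [Fintype V] {G : SimpleGraph V} {n1 n2 : ℕ}
    (T : NCT3 G n1 n2) (f : V → ℕ) (hf : ∀ v, 0 < f v) :
    ¬ ∃ S, ∀ v, ∑ x ∈ nbr G v, f x = S := by
  rintro ⟨S, hS⟩
  obtain ⟨i, j, r, -, -, -, hir, hjr, hsub₁, hsub₂, hcard⟩ := T.propII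
  have h₁ := Finset.sum_add_card_sdiff_le_sum f hf hsub₁
  have h₂ := Finset.sum_add_card_sdiff_le_sum f hf hsub₂
  rw [T.c1.sum_sdiff_succ_add_two_mul_eq hS T.propI1 i hir,
    T.c2.sum_sdiff_succ_add_two_mul_eq hS T.propI2 j hjr] at h₂
  omega

theorem nbr_sum_inl {V₁ V₂ : Type*} [Fintype V₁] [Fintype V₂]
    (G₁ : SimpleGraph V₁) (G₂ : SimpleGraph V₂) (v : V₁) :
    nbr (G₁ ⊕g G₂) (.inl v) = (nbr G₁ v).map .inl := by
  ext (w | w) <;> simp [nbr]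

/-- If `G₁` contains a Type-3 pair of neighbourhood chains (NC-T3),
then the disjoint union `G₁ ∪ G₂` is non-distance magic. -/
theorem disjoint_union_nct3_non_distance_magic {V₁ V₂ : Type*}
    [Fintype V₁] [Fintype V₂] (G₁ : SimpleGraph V₁) (G₂ : SimpleGraph V₂)
    (n1 n2 : ℕ) (T : NCT3 G₁ n1 n2) :
    ¬ IsDistanceMagic (G₁ ⊕g G₂) := by
  rintro ⟨f, S, hf⟩
  refine T.not_exists_nbr_sum_eq (fun v => (f (.inl v) : ℕ) + 1) (fun _ => Nat.succ_pos _) ⟨S, ?_⟩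
  intro v
  rw [← hf (.inl v), nbr_sum_inl, Finset.sum_map]
  rfl
end
end
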